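/- Let g_1,…,g_p be univalent contractions on a square S with g_i(S) ⋐ S, and suppose there exist constants 0 < a < 1 and R > 0 such that every composition of k of the maps sends S into a set of diameter at most a^k, and every image g_i(S) is at distance at least R from the boundary of S. Then the distortion D = sup_n S_n(g_1,…,g_p) is finite, where S_n = max_{|I|=n} max_{z,z'∈cl(S)} |g'_I(z)|/|g'_I(z')|; moreover for every ε > 0 there is n_ε such that S_n ≤ S_{n_ε}·(1+ε) for all n ≥ n_ε. -/

import Mathlib

open Metric

/-- The open axis-parallel square centered at 0 with side length `s`. -/
def square0 (s : ℝ) : Set ℂ := {z : ℂ | |z.re| < s/2 ∧ |z.im| < s/2}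

/-- For a word `I = (i₁,…,i_k)`, the composition `f_I = f_{i_k} ∘ ⋯ ∘ f_{i_1}`. -/
def wordMap {p : ℕ} (f : Fin p → ℂ → ℂ) (I : List (Fin p)) (z : ℂ) : ℂ :=
  I.foldl (fun w i => f i w) z

/-- The inscribed-disk diameter of `P` centered at `c`: the diameter of the largest open
disk of center `c` contained in `P`. -/
noncomputable def inscDiam (P : Set ℂ) (c : ℂ) : ℝ :=
  sSup {d : ℝ | 0 ≤ d ∧ ball c (d/2) ⊆ P}

/-- The escribed-disk diameter of `P` centered at `c`: the diameter of the smallest disk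
of center `c` containing `P`. -/
noncomputable def escDiam (P : Set ℂ) (c : ℂ) : ℝ :=
  sInf {d : ℝ | 0 ≤ d ∧ P ⊆ ball c (d/2)}

/-- `S_n`: the maximal distortion over words of length `n`. -/
noncomputable def Sn {p : ℕ} (g : Fin p → ℂ → ℂ) (s : ℝ) (n : ℕ) : ℝ :=
  sSup {x : ℝ | ∃ I : List (Fin p), I.length = n ∧
    ∃ z ∈ closure (square0 s), ∃ z' ∈ closure (square0 s),
      x = ‖deriv (wordMap g I) z‖ / ‖deriv (wordMap g I) z'‖}

/-!
Univalence makes every `g_i'` nonvanishing on the compact closed square `K`; being also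
Lipschitz there, it satisfies `|g_i'(w)| ≤ exp (C |w - w'|) |g_i'(w')|` on `K` (compactness takes
the place of Koebe's distortion theorem). After `k` letters of a word the orbits of two points of
`K` are at distance at most `M aᵏ`, so by the chain rule `|g_I'(z)| / |g_I'(z')|` is at most
`exp (C M / (1 - a))`, uniformly in `I`. Since `S_0 = 1`, the supremum `D` of the `S_n` is
positive, and any `n_ε` with `S_{n_ε} > D / (1 + ε)` does the job.
-/

open Filter Set Topology

theorem isBounded_square0 (s : ℝ) : Bornology.IsBounded (square0 s) := by
  have : square0 s = ball 0 (s / 2) ×ℂ ball 0 (s / 2) := by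
    ext z
    simp [square0, Complex.mem_reProdIm]
  exact this ▸ isBounded_ball.reProdIm isBounded_ball

theorem zero_mem_square0 {s : ℝ} (hs : 0 < s) : (0 : ℂ) ∈ square0 s := by
  simp [square0, hs]

theorem dist_le_diam_image_of_mem_closure {α β : Type*} [TopologicalSpace α]
    [PseudoMetricSpace β] {f : α → β} {S : Set α} (hf : ContinuousOn f (closure S))
    (hS : Bornology.IsBounded (f '' S)) {x y : α} (hx : x ∈ closure S) (hy : y ∈ closure S) :
    dist (f x) (f y) ≤ diam (f '' S) := by
  rw [← diam_closure]
  exact dist_le_diam_of_mem hS.closure (hf.image_closure ⟨x, hx, rfl⟩)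
    (hf.image_closure ⟨y, hy, rfl⟩)

theorem exists_le_mul_one_add_of_bddAbove {ι : Type*} {u : ι → ℝ} (hu : BddAbove (range u))
    {i₀ : ι} (hi₀ : 0 < u i₀) {ε : ℝ} (hε : 0 < ε) : ∃ N, ∀ i, u i ≤ u N * (1 + ε) := by
  have : Nonempty ι := ⟨i₀⟩
  have hD : 0 < iSup u := hi₀.trans_le (le_ciSup hu i₀)
  obtain ⟨N, hN⟩ := exists_lt_of_lt_ciSup (div_lt_self hD (by linarith : 1 < 1 + ε))
  exact ⟨N, fun i => (le_ciSup hu i).trans ((div_lt_iff₀ (by positivity)).1 hN).le⟩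

theorem IsCompact.exists_norm_le_exp_mul_dist_mul_norm {α E : Type*} [PseudoMetricSpace α]
    [SeminormedAddCommGroup E] {φ : α → E} {K : Set α} (hK : IsCompact K)
    (hφ : LocallyLipschitzOn K φ) (hφ₀ : ∀ x ∈ K, 0 < ‖φ x‖) :
    ∃ c, 0 ≤ c ∧ ∀ x ∈ K, ∀ y ∈ K, ‖φ x‖ ≤ Real.exp (c * dist x y) * ‖φ y‖ := by
  obtain ⟨L, hL⟩ := hφ.exists_lipschitzOnWith_of_compact hK
  obtain ⟨m, hm, hmK⟩ :=
    hK.exists_forall_le' (continuous_norm.comp_continuousOn hφ.continuousOn) hφ₀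
  refine ⟨L / m, by positivity, fun x hx y hy => ?_⟩
  calc ‖φ x‖ ≤ ‖φ y‖ + dist (φ x) (φ y) := by
        rw [dist_eq_norm]; exact norm_le_norm_add_norm_sub' _ _
    _ ≤ ‖φ y‖ + L / m * dist x y * m := by
        rw [show (L / m * dist x y * m : ℝ) = L * dist x y by field_simp]
        gcongr
        exact hL.dist_le_mul x hx y hy
    _ ≤ ‖φ y‖ + L / m * dist x y * ‖φ y‖ := by gcongr; exact hmK y hy
    _ = (L / m * dist x y + 1) * ‖φ y‖ := by ring
    _ ≤ Real.exp (L / m * dist x y) * ‖φ y‖ := by gcongr; exact Real.add_one_le_exp _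

theorem AnalyticAt.exists_eventuallyEq_pow {G : ℂ → ℂ} {z₀ : ℂ} (hG : AnalyticAt ℂ G z₀)
    (hG₀ : G z₀ ≠ 0) {n : ℕ} (hn : n ≠ 0) :
    ∃ r : ℂ → ℂ, AnalyticAt ℂ r z₀ ∧ r z₀ ≠ 0 ∧ ∀ᶠ z in 𝓝 z₀, r z ^ n = G z := by
  obtain ⟨c, hc⟩ := IsAlgClosed.exists_pow_nat_eq (G z₀) (Nat.pos_of_ne_zero hn)
  have hc₀ : c ≠ 0 := by rintro rfl; exact hG₀ (by simpa [hn] using hc.symm)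
  refine ⟨fun z => c * Complex.exp (Complex.log (G z / G z₀) / n), ?_, by simp [hc₀], ?_⟩
  · refine analyticAt_const.mul (analyticAt_cexp.comp (.div ?_ analyticAt_const (by simpa)))
    refine (analyticAt_clog ?_).comp (hG.div analyticAt_const hG₀)
    simp [hG₀]
  · filter_upwards [hG.continuousAt.eventually_ne hG₀] with z hz
    rw [mul_pow, ← Complex.exp_nat_mul, mul_div_cancel₀ _ (by simpa),
      Complex.exp_log (div_ne_zero hz hG₀), hc, mul_div_cancel₀ _ hG₀]

theorem AnalyticAt.exists_eventuallyEq_pow_of_apply_eq_zero {h : ℂ → ℂ} {z₀ : ℂ}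
    (hh : AnalyticAt ℂ h z₀) (hz₀ : h z₀ = 0) (hne : ¬ ∀ᶠ z in 𝓝 z₀, h z = 0) :
    ∃ n ≠ 0, ∃ φ : ℂ → ℂ, φ z₀ = 0 ∧ HasStrictDerivAt φ (deriv φ z₀) z₀ ∧ deriv φ z₀ ≠ 0 ∧
      h =ᶠ[𝓝 z₀] φ ^ n := by
  obtain ⟨n, hn⟩ := WithTop.ne_top_iff_exists.mp (mt analyticOrderAt_eq_top.mp hne)
  obtain ⟨G, hG, hG₀, hhG⟩ := (hh.analyticOrderAt_eq_natCast (n := n)).mp hn.symm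
  have hn₀ : n ≠ 0 := by
    rintro rfl
    exact hG₀ (by simpa [hz₀] using hhG.self_of_nhds.symm)
  obtain ⟨r, hr, hr₀, hrG⟩ := hG.exists_eventuallyEq_pow hG₀ hn₀
  have hφ : HasDerivAt (fun z => (z - z₀) * r z) (r z₀) z₀ := by
    simpa using ((hasDerivAt_id z₀).sub_const z₀).fun_mul hr.differentiableAt.hasDerivAt
  refine ⟨n, hn₀, _, by simp, ((analyticAt_id.sub analyticAt_const).mul hr).hasStrictDerivAt,
    hφ.deriv ▸ hr₀, ?_⟩
  filter_upwards [hhG, hrG] with z hz hrz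
  simp [hz, mul_pow, hrz]

theorem not_injOn_of_eventuallyEq_pow {h φ : ℂ → ℂ} {z₀ φ' : ℂ} {V : Set ℂ} (hV : V ∈ 𝓝 z₀)
    (hφ : HasStrictDerivAt φ φ' z₀) (hφ' : φ' ≠ 0) (hφ₀ : φ z₀ = 0) {n : ℕ} (hn : 2 ≤ n)
    (hhφ : h =ᶠ[𝓝 z₀] φ ^ n) : ¬ InjOn h V := by
  intro hinj
  set T := {z | h z = φ z ^ n} ∩ V
  have hT : φ '' T ∈ 𝓝 0 := hφ₀ ▸ hφ.map_nhds_eq hφ' ▸ image_mem_map (inter_mem hhφ hV)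
  obtain ⟨ω, hω⟩ : ∃ ω : ℂ, IsPrimitiveRoot ω n := ⟨_, Complex.isPrimitiveRoot_exp n (by omega)⟩
  -- `φ` is open at `z₀`, so for small `w ≠ 0` both `w` and `ω * w` have preimages in `T`, where
  -- `h` takes the same value `wⁿ`.
  have hωT : ∀ᶠ w in 𝓝 (0 : ℂ), ω * w ∈ φ '' T :=
    (continuous_const_mul ω).tendsto' 0 0 (mul_zero ω) hT
  obtain ⟨w, ⟨⟨z₁, ⟨hz₁, hz₁V⟩, rfl⟩, ⟨z₂, ⟨hz₂, hz₂V⟩, h₂⟩⟩, hw⟩ :=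
    ((eventually_nhdsWithin_of_eventually_nhds (inter_mem hT hωT)).and
      self_mem_nhdsWithin : ∀ᶠ w in 𝓝[≠] (0 : ℂ), _).exists
  have : z₂ = z₁ := hinj hz₂V hz₁V (by rw [hz₁, hz₂, h₂, mul_pow, hω.pow_eq_one, one_mul])
  subst this
  exact hω.ne_one (by omega) (mul_right_cancel₀ hw (h₂.symm.trans (one_mul _).symm))

theorem AnalyticAt.deriv_ne_zero_of_injOn {f : ℂ → ℂ} {z₀ : ℂ} {V : Set ℂ}
    (hf : AnalyticAt ℂ f z₀) (hV : V ∈ 𝓝 z₀) (hinj : InjOn f V) : deriv f z₀ ≠ 0 := by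
  intro hd
  have hne : ¬ ∀ᶠ z in 𝓝 z₀, f z - f z₀ = 0 := by
    intro hev
    obtain ⟨z, ⟨hz, hzV⟩, hzz₀⟩ :=
      ((eventually_nhdsWithin_of_eventually_nhds (hev.and hV)).and self_mem_nhdsWithin :
        ∀ᶠ z in 𝓝[≠] z₀, _).exists
    exact hzz₀ (hinj hzV (mem_of_mem_nhds hV) (sub_eq_zero.mp hz))
  obtain ⟨n, hn₀, φ, hφ₀, hφ, hφ', hfφ⟩ :=
    (hf.fun_sub analyticAt_const).exists_eventuallyEq_pow_of_apply_eq_zero (sub_self (f z₀)) hne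
  rcases eq_or_ne n 1 with rfl | hn₁
  · apply hφ'
    rw [← hd, ← deriv_sub_const (f := f) (f z₀)]
    simpa only [pow_one] using hfφ.deriv_eq.symm
  · exact not_injOn_of_eventuallyEq_pow hV hφ hφ' hφ₀ (by omega) hfφ
      (fun z hz z' hz' hzz' => hinj hz hz' (by simpa using hzz'))

theorem locallyLipschitzOn_deriv_of_differentiableOn {f : ℂ → ℂ} {U : Set ℂ} (hU : IsOpen U)
    (hf : DifferentiableOn ℂ f U) : LocallyLipschitzOn U (deriv f) := by
  intro z hz
  obtain ⟨L, t, ht, hL⟩ :=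
    ((hf.analyticAt (hU.mem_nhds hz)).deriv.contDiffAt (n := 1)).exists_lipschitzOnWith
  exact ⟨L, t, mem_nhdsWithin_of_mem_nhds ht, hL⟩

theorem exists_norm_deriv_le_exp_mul_dist_mul_norm {ι : Type*} [Finite ι] {f : ι → ℂ → ℂ}
    {U K : Set ℂ} (hU : IsOpen U) (hK : IsCompact K) (hKU : K ⊆ U)
    (hf : ∀ i, DifferentiableOn ℂ (f i) U) (hf' : ∀ i, ∀ z ∈ K, deriv (f i) z ≠ 0) :
    ∃ C, 0 ≤ C ∧ ∀ i, ∀ w ∈ K, ∀ w' ∈ K,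
      ‖deriv (f i) w‖ ≤ Real.exp (C * dist w w') * ‖deriv (f i) w'‖ := by
  choose c hc₀ hc using fun i => hK.exists_norm_le_exp_mul_dist_mul_norm
    ((locallyLipschitzOn_deriv_of_differentiableOn hU (hf i)).mono hKU)
    fun z hz => norm_pos_iff.2 (hf' i z hz)
  obtain ⟨C, hC⟩ := Finite.bddAbove_range c
  refine ⟨max C 0, le_max_right _ _, fun i w hw w' hw' => (hc i w hw w' hw').trans ?_⟩
  gcongr
  exact (hC ⟨i, rfl⟩).trans (le_max_left _ _)

noncomputable def wordDeriv {p : ℕ} (f : Fin p → ℂ → ℂ) : List (Fin p) → ℂ → ℂ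
  | [], _ => 1
  | i :: I, z => deriv (f i) z * wordDeriv f I (f i z)

section Words

variable {p : ℕ} {f : Fin p → ℂ → ℂ} {K : Set ℂ}

theorem wordMap_nil (z : ℂ) : wordMap f [] z = z := rfl

theorem wordMap_cons (i : Fin p) (I : List (Fin p)) (z : ℂ) :
    wordMap f (i :: I) z = wordMap f I (f i z) := rfl

theorem mapsTo_wordMap (hf : ∀ i, MapsTo (f i) K K) (I : List (Fin p)) :
    MapsTo (wordMap f I) K K := by
  induction I with
  | nil => exact mapsTo_id K
  | cons i I ih => exact ih.comp (hf i)

theorem continuousOn_wordMap (hf : ∀ i, MapsTo (f i) K K) (hc : ∀ i, ContinuousOn (f i) K)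
    (I : List (Fin p)) : ContinuousOn (wordMap f I) K := by
  induction I with
  | nil => exact continuousOn_id
  | cons i I ih => exact ih.comp (hc i) (hf i)

theorem hasDerivAt_wordMap (hf : ∀ i, MapsTo (f i) K K)
    (hd : ∀ i, ∀ z ∈ K, DifferentiableAt ℂ (f i) z) (I : List (Fin p)) {z : ℂ} (hz : z ∈ K) :
    HasDerivAt (wordMap f I) (wordDeriv f I z) z := by
  induction I generalizing z with
  | nil => exact hasDerivAt_id z
  | cons i I ih =>
    rw [wordDeriv, mul_comm]
    exact (ih (hf i hz)).comp z (hd i z hz).hasDerivAt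

theorem dist_wordMap_le_mul_pow {S : Set ℂ} (hS : Bornology.IsBounded S)
    (hf : ∀ i, MapsTo (f i) (closure S) (closure S)) (hc : ∀ i, ContinuousOn (f i) (closure S))
    {a : ℝ} (ha : 0 ≤ a)
    (hdiam : ∀ I : List (Fin p), I ≠ [] → diam (wordMap f I '' S) ≤ a ^ I.length)
    (J : List (Fin p)) {z z' : ℂ} (hz : z ∈ closure S) (hz' : z' ∈ closure S) :
    dist (wordMap f J z) (wordMap f J z') ≤ max 1 (diam (closure S)) * a ^ J.length := by
  rcases eq_or_ne J [] with rfl | hJ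
  · simpa [wordMap_nil] using (dist_le_diam_of_mem hS.closure hz hz').trans (le_max_right 1 _)
  have hJS : Bornology.IsBounded (wordMap f J '' S) :=
    hS.closure.subset (image_subset_iff.2 fun w hw => mapsTo_wordMap hf J (subset_closure hw))
  calc dist (wordMap f J z) (wordMap f J z') ≤ diam (wordMap f J '' S) :=
        dist_le_diam_image_of_mem_closure (continuousOn_wordMap hf hc J) hJS hz hz'
    _ ≤ a ^ J.length := hdiam J hJ
    _ ≤ max 1 (diam (closure S)) * a ^ J.length :=
        le_mul_of_one_le_left (by positivity) (le_max_left _ _)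

theorem norm_wordDeriv_le_exp_mul_sum_dist (hf : ∀ i, MapsTo (f i) K K) {C : ℝ}
    (hstep : ∀ i, ∀ w ∈ K, ∀ w' ∈ K,
      ‖deriv (f i) w‖ ≤ Real.exp (C * dist w w') * ‖deriv (f i) w'‖)
    (I : List (Fin p)) {z z' : ℂ} (hz : z ∈ K) (hz' : z' ∈ K) :
    ‖wordDeriv f I z‖ ≤ Real.exp (C * ∑ k ∈ Finset.range I.length,
      dist (wordMap f (I.take k) z) (wordMap f (I.take k) z')) * ‖wordDeriv f I z'‖ := by
  induction I generalizing z z' with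
  | nil => simp [wordDeriv]
  | cons i I ih =>
    simp only [List.length_cons, Finset.sum_range_succ', List.take_succ_cons, wordMap_cons,
      List.take_zero, wordMap_nil, mul_add, Real.exp_add]
    calc ‖wordDeriv f (i :: I) z‖ = ‖deriv (f i) z‖ * ‖wordDeriv f I (f i z)‖ := norm_mul _ _
      _ ≤ (Real.exp (C * dist z z') * ‖deriv (f i) z'‖) *
          (Real.exp (C * ∑ k ∈ Finset.range I.length,
            dist (wordMap f (I.take k) (f i z)) (wordMap f (I.take k) (f i z'))) *
            ‖wordDeriv f I (f i z')‖) := by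
        gcongr
        exacts [hstep i z hz z' hz', ih (hf i hz) (hf i hz')]
      _ = _ := by rw [wordDeriv, norm_mul]; ring

theorem norm_wordDeriv_le_exp (hf : ∀ i, MapsTo (f i) K K) {C : ℝ} (hC : 0 ≤ C)
    (hstep : ∀ i, ∀ w ∈ K, ∀ w' ∈ K,
      ‖deriv (f i) w‖ ≤ Real.exp (C * dist w w') * ‖deriv (f i) w'‖)
    {a M : ℝ} (ha₀ : 0 ≤ a) (ha₁ : a < 1)
    (hM : ∀ J : List (Fin p), ∀ z ∈ K, ∀ z' ∈ K,
      dist (wordMap f J z) (wordMap f J z') ≤ M * a ^ J.length)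
    (I : List (Fin p)) {z z' : ℂ} (hz : z ∈ K) (hz' : z' ∈ K) :
    ‖wordDeriv f I z‖ ≤ Real.exp (C * (M / (1 - a))) * ‖wordDeriv f I z'‖ := by
  refine (norm_wordDeriv_le_exp_mul_sum_dist hf hstep I hz hz').trans ?_
  have hM₀ : 0 ≤ M := by simpa using hM [] z hz z hz
  gcongr
  calc ∑ k ∈ Finset.range I.length, dist (wordMap f (I.take k) z) (wordMap f (I.take k) z')
      ≤ ∑ k ∈ Finset.range I.length, M * a ^ k := by
        refine Finset.sum_le_sum fun k hk => (hM _ z hz z' hz').trans_eq ?_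
        rw [List.length_take_of_le (Finset.mem_range.1 hk).le]
    _ = M * ∑ k ∈ Finset.range I.length, a ^ k := (Finset.mul_sum _ _ _).symm
    _ ≤ M * (1 / (1 - a)) := by
        gcongr
        simpa using geom_sum_Ico_le_of_lt_one (m := 0) (n := I.length) ha₀ ha₁
    _ = M / (1 - a) := mul_one_div M (1 - a)

end Words

section Distortion

variable {p : ℕ} {g : Fin p → ℂ → ℂ} {s : ℝ}

theorem Sn_le {n : ℕ} {B : ℝ} (hB : 0 ≤ B)
    (h : ∀ I : List (Fin p), I.length = n → ∀ z ∈ closure (square0 s), ∀ z' ∈ closure (square0 s),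
      ‖deriv (wordMap g I) z‖ ≤ B * ‖deriv (wordMap g I) z'‖) :
    Sn g s n ≤ B := by
  refine Real.sSup_le ?_ hB
  rintro _ ⟨I, hI, z, hz, z', hz', rfl⟩
  exact div_le_of_le_mul₀ (norm_nonneg _) hB (h I hI z hz z' hz')

theorem Sn_zero (hs : 0 < s) : Sn g s 0 = 1 := by
  have hid : wordMap g [] = id := rfl
  have h₀ : (0 : ℂ) ∈ closure (square0 s) := subset_closure (zero_mem_square0 hs)
  rw [Sn]
  convert csSup_singleton (1 : ℝ) using 1
  congr 1
  ext x
  constructor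
  · rintro ⟨I, hI, z, -, z', -, rfl⟩
    simp [List.length_eq_zero_iff.1 hI, hid]
  · rintro rfl
    exact ⟨[], rfl, 0, h₀, 0, h₀, by simp [hid]⟩

end Distortion

theorem distortion_bounded_and_stabilizes_general (p : ℕ) (s : ℝ) (hs : 0 < s)
    (U : Set ℂ) (hU : IsOpen U) (hSU : closure (square0 s) ⊆ U)
    (g : Fin p → ℂ → ℂ)
    (hg : ∀ i, DifferentiableOn ℂ (g i) U ∧ Set.InjOn (g i) U)
    (hin : ∀ i, closure (g i '' square0 s) ⊆ square0 s)
    (a : ℝ) (ha0 : 0 < a) (ha1 : a < 1)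
    (hdiam : ∀ I : List (Fin p), I ≠ [] →
      Metric.diam (wordMap g I '' square0 s) ≤ a ^ I.length) :
    BddAbove (Set.range (Sn g s)) ∧
      ∀ ε > (0:ℝ), ∃ nε : ℕ, ∀ n ≥ nε, Sn g s n ≤ Sn g s nε * (1 + ε) := by
  set K := closure (square0 s)
  have hcont : ∀ i, ContinuousOn (g i) K := fun i => (hg i).1.continuousOn.mono hSU
  have hgK : ∀ i, MapsTo (g i) K K := fun i z hz =>
    subset_closure (hin i ((hcont i).image_closure (mem_image_of_mem (g i) hz)))
  have hdiff : ∀ i, ∀ z ∈ K, DifferentiableAt ℂ (g i) z := fun i z hz =>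
    (hg i).1.differentiableAt (hU.mem_nhds (hSU hz))
  obtain ⟨C, hC₀, hC⟩ := exists_norm_deriv_le_exp_mul_dist_mul_norm hU
    (isBounded_square0 s).isCompact_closure hSU (fun i => (hg i).1) fun i z hz =>
      ((hg i).1.analyticAt (hU.mem_nhds (hSU hz))).deriv_ne_zero_of_injOn
        (hU.mem_nhds (hSU hz)) (hg i).2
  have hbound : ∀ n, Sn g s n ≤ Real.exp (C * (max 1 (diam K) / (1 - a))) := fun n =>
    Sn_le (Real.exp_pos _).le fun I _ z hz z' hz' => by
      rw [(hasDerivAt_wordMap hgK hdiff I hz).deriv, (hasDerivAt_wordMap hgK hdiff I hz').deriv]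
      exact norm_wordDeriv_le_exp hgK hC₀ hC ha0.le ha1
        (fun J _ hz _ hz' => dist_wordMap_le_mul_pow (isBounded_square0 s) hgK hcont ha0.le
          hdiam J hz hz') I hz hz'
  have hbdd : BddAbove (range (Sn g s)) := ⟨_, forall_mem_range.2 hbound⟩
  refine ⟨hbdd, fun ε hε => ?_⟩
  obtain ⟨N, hN⟩ := exists_le_mul_one_add_of_bddAbove hbdd (i₀ := 0) (by simp [Sn_zero hs]) hε
  exact ⟨N, fun n _ => hN n⟩

/-- If every composition of `k` maps of the IFS contracts the square `S` to a set of
diameter at most `aᵏ` (`0 < a < 1`), and each image `g_i(S)` is at distance at least `R`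
from the boundary of `S`, then the distortion `sup_n S_n` is finite; moreover for every
`ε > 0` there is `n_ε` with `S_n ≤ S_{n_ε}·(1 + ε)` for all `n ≥ n_ε`. -/
theorem distortion_bounded_and_stabilizes (p : ℕ) (s : ℝ) (hs : 0 < s)
    (U : Set ℂ) (hU : IsOpen U) (hSU : closure (square0 s) ⊆ U)
    (g : Fin p → ℂ → ℂ)
    (hg : ∀ i, DifferentiableOn ℂ (g i) U ∧ Set.InjOn (g i) U)
    (hin : ∀ i, closure (g i '' square0 s) ⊆ square0 s)
    (a R : ℝ) (ha0 : 0 < a) (ha1 : a < 1) (hR : 0 < R)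
    (hdiam : ∀ I : List (Fin p), I ≠ [] →
      Metric.diam (wordMap g I '' square0 s) ≤ a ^ I.length)
    (hdistance : ∀ i, ∀ z ∈ g i '' square0 s, ball z R ⊆ square0 s) :
    BddAbove (Set.range (Sn g s)) ∧
      ∀ ε > (0:ℝ), ∃ nε : ℕ, ∀ n ≥ nε, Sn g s n ≤ Sn g s nε * (1 + ε) :=
  distortion_bounded_and_stabilizes_general p s hs U hU hSU g hg hin a ha0 ha1 hdiam
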